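/- For all positive integers $s_1,s_2,s_3,s_4$ and every positive integer $n$, $-\sum_{j=1}^{n} \frac{H_j^{(s_1)} H_j^{(s_3)} H_j^{(s_4)}}{j^{s_2}} + H(s_4;n) \sum_{j=1}^{n} \frac{H_j^{(s_1)} H_j^{(s_3)}}{j^{s_2}} = H(s_1,s_3,s_2,s_4;n) + H(s_3,s_1,s_2,s_4;n) + H(s_3,s_1+s_2,s_4;n) + H(s_1+s_3,s_2,s_4;n) + H(s_1,s_2+s_3,s_4;n) + H(s_1+s_2+s_3,s_4;n)$. -/

import Mathlib

open Finset

/-- Auxiliary: multiple harmonic sum with exponent list given in *reverse* order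
(head is the last exponent `s_k`), via the standard recurrence. -/
def mhsAux : List ℕ → ℕ → ℚ
  | [], _ => 1
  | s :: rest, n => ∑ m ∈ Finset.Icc 1 n, mhsAux rest (m - 1) / (m : ℚ) ^ s

/-- Multiple harmonic sum `H(s_1,…,s_k; n) = ∑_{1 ≤ j_1 < ⋯ < j_k ≤ n} 1/(j_1^{s_1}⋯j_k^{s_k})`. -/
def mhs (l : List ℕ) (n : ℕ) : ℚ := mhsAux l.reverse n

/-- Generalized harmonic number `H_n^{(s)} = ∑_{m=1}^n 1/m^s`. -/
def hsum (s n : ℕ) : ℚ := ∑ m ∈ Finset.Icc 1 n, 1 / (m : ℚ) ^ s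

lemma hsum_zero (s : ℕ) : hsum s 0 = 0 := by simp [hsum]

lemma hsum_succ (s n : ℕ) : hsum s (n+1) = hsum s n + 1/((n:ℚ)+1)^s := by
  unfold hsum
  rw [Finset.sum_Icc_succ_top (by omega)]
  push_cast; ring

lemma mhsAux_succ (t : List ℕ) (s n : ℕ) :
    mhsAux (s :: t) (n+1) = mhsAux (s :: t) n + mhsAux t n / ((n:ℚ)+1) ^ s := by
  show (∑ m ∈ Finset.Icc 1 (n+1), mhsAux t (m-1) / (m:ℚ)^s) = _
  rw [Finset.sum_Icc_succ_top (by omega)]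
  simp [mhsAux]

lemma mhs_succ (l : List ℕ) (s n : ℕ) :
    mhs (l ++ [s]) (n+1) = mhs (l ++ [s]) n + mhs l n / ((n:ℚ)+1) ^ s := by
  unfold mhs
  rw [List.reverse_append]
  exact mhsAux_succ l.reverse s n

lemma mhs_zero (l : List ℕ) (s : ℕ) : mhs (l ++ [s]) 0 = 0 := by
  unfold mhs
  rw [List.reverse_append]
  show (∑ m ∈ Finset.Icc 1 0, _) = (0:ℚ)
  simp

lemma mhs_cons_zero (a : ℕ) (l : List ℕ) : mhs (a :: l) 0 = 0 := by
  obtain ⟨x, xs, hx⟩ := List.exists_cons_of_ne_nil (show (a::l).reverse ≠ [] by simp)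
  unfold mhs
  rw [hx]
  simp [mhsAux]

lemma mhs_succ2 (a b n : ℕ) :
    mhs [a,b] (n+1) = mhs [a,b] n + mhs [a] n / ((n:ℚ)+1) ^ b := mhs_succ [a] b n

lemma mhs_succ3 (a b c n : ℕ) :
    mhs [a,b,c] (n+1) = mhs [a,b,c] n + mhs [a,b] n / ((n:ℚ)+1) ^ c := mhs_succ [a,b] c n

lemma mhs_succ4 (a b c d n : ℕ) :
    mhs [a,b,c,d] (n+1) = mhs [a,b,c,d] n + mhs [a,b,c] n / ((n:ℚ)+1) ^ d :=
  mhs_succ [a,b,c] d n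

lemma mhs_single (s n : ℕ) : mhs [s] n = hsum s n := by
  simp [mhs, mhsAux, hsum]

/-- stuffle for two factors -/
lemma stuffle2 (a b n : ℕ) :
    hsum a n * hsum b n = mhs [a,b] n + mhs [b,a] n + hsum (a+b) n := by
  induction n with
  | zero => simp [hsum_zero, mhs_cons_zero]
  | succ n ih =>
      rw [hsum_succ, hsum_succ, hsum_succ, mhs_succ2 a b, mhs_succ2 b a,
        mhs_single, mhs_single]
      rw [pow_add]
      linear_combination ih

theorem key (a b c : ℕ) (n : ℕ) :
    (∑ j ∈ Finset.Icc 1 n, hsum a j * hsum b j / (j:ℚ)^c) =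
      mhs [a,b,c] n + mhs [b,a,c] n + mhs [b,a+c] n + mhs [a+b,c] n
        + mhs [a,c+b] n + mhs [a+c+b] n := by
  induction n with
  | zero =>
      simp [mhs_cons_zero, mhs_single, hsum_zero]
  | succ n ih =>
      rw [Finset.sum_Icc_succ_top (by omega), ih,
        mhs_succ3 a b c, mhs_succ3 b a c, mhs_succ2 b (a+c),
        mhs_succ2 (a+b) c, mhs_succ2 a (c+b),
        stuffle2 a b (n+1), mhs_succ2 a b, mhs_succ2 b a, hsum_succ (a+b),
        mhs_single (a+c+b) (n+1), hsum_succ (a+c+b)]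
      simp only [mhs_single, pow_add]
      push_cast
      ring

theorem stmt4 (s1 s2 s3 s4 n : ℕ) (hs1 : 0 < s1) (hs2 : 0 < s2) (hs3 : 0 < s3)
    (hs4 : 0 < s4) (hn : 0 < n) :
    -(∑ j ∈ Finset.Icc 1 n, hsum s1 j * hsum s3 j * hsum s4 j / (j : ℚ) ^ s2)
        + hsum s4 n * ∑ j ∈ Finset.Icc 1 n, hsum s1 j * hsum s3 j / (j : ℚ) ^ s2 =
      mhs [s1, s3, s2, s4] n + mhs [s3, s1, s2, s4] n + mhs [s3, s1 + s2, s4] n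
        + mhs [s1 + s3, s2, s4] n + mhs [s1, s2 + s3, s4] n + mhs [s1 + s2 + s3, s4] n := by
  clear hn
  induction n with
  | zero =>
      simp [hsum_zero, mhs_cons_zero]
  | succ n ih =>
      rw [Finset.sum_Icc_succ_top (by omega), Finset.sum_Icc_succ_top (by omega),
        hsum_succ s4,
        mhs_succ4 s1 s3 s2 s4, mhs_succ4 s3 s1 s2 s4, mhs_succ3 s3 (s1+s2) s4,
        mhs_succ3 (s1+s3) s2 s4, mhs_succ3 s1 (s2+s3) s4, mhs_succ2 (s1+s2+s3) s4]
      have hkey := key s1 s3 s2 n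
      push_cast
      push_cast at ih hkey
      linear_combination ih + hkey / ((n:ℚ)+1)^s4
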